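/- Let ε > 0 and let f : ℝ → ℝ be a function satisfying |f(x + y) − f(x) − f(y)| ≤ ε for all x, y ∈ ℝ, and such that the mapping x ↦ f(sin(x)) − cos(x)·f(x) is locally bounded on ℝ. Then there exist a real number λ and a real derivation χ : ℝ → ℝ such that |f(x) − (χ(x) + λ·x)| ≤ ε for all x ∈ ℝ. -/

import Mathlib

open Real Set

/-- A function `φ` is locally bounded on a set `s` if every point of `s` has a
neighborhood (within `s`) on which `φ` is bounded. -/
def LocallyBoundedOn (φ : ℝ → ℝ) (s : Set ℝ) : Prop :=
  ∀ x ∈ s, ∃ C : ℝ, ∀ᶠ y in nhdsWithin x s, |φ y| ≤ C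

/-- A real-valued function is *regular* on its domain `s` if it is locally bounded,
or continuous, or Lebesgue measurable on `s`. -/
def RegularOn (φ : ℝ → ℝ) (s : Set ℝ) : Prop :=
  LocallyBoundedOn φ s ∨ ContinuousOn φ s ∨ Measurable (s.restrict φ)

/-- A real derivation: an additive function satisfying the Leibniz rule. -/
def IsRealDerivation (χ : ℝ → ℝ) : Prop :=
  (∀ x y : ℝ, χ (x + y) = χ x + χ y) ∧ (∀ x y : ℝ, χ (x * y) = x * χ y + y * χ x)

/-!
By Hyers' theorem `f` lies within `ε` of an additive `g`, obtained as the limit of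
`2⁻ⁿ f (2ⁿ x)`, and `B x = g (sin x) - cos x * g x` is still locally bounded.
The addition formulas for `sin` and `cos` express the Leibniz defect
`G u v = g (u v) - u g v - v g u` at `(sin x, cos y)` through translates of `B`, up to a
term linear in `sin x`. Hence `t ↦ G t v` is additive and bounded on `[0, 1]` for `|v| ≤ 1`,
so it is linear; by symmetry of `G` this linearity propagates to all `v`, giving
`G u v = -g 1 * u * v`. Then `χ x = g x - g 1 * x` is a derivation and `λ = g 1`.
-/

open Filter

namespace AddMonoidHom

theorem eq_zero_of_abs_le {A : Type*} [AddMonoid A] (k : A →+ ℝ) (C : ℝ)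
    (hC : ∀ x, |k x| ≤ C) : k = 0 := by
  ext x
  by_contra hx
  have hpos : 0 < |k x| := abs_pos.mpr hx
  obtain ⟨n, hn⟩ := exists_nat_gt (C / |k x|)
  have hmul : |k (n • x)| = n * |k x| := by
    rw [map_nsmul, nsmul_eq_mul, abs_mul, Nat.abs_cast]
  have := hC (n • x)
  rw [div_lt_iff₀ hpos] at hn
  linarith

theorem apply_eq_mul_of_abs_le_on_Icc (h : ℝ →+ ℝ) (C : ℝ)
    (hC : ∀ x ∈ Icc (0 : ℝ) 1, |h x| ≤ C) (x : ℝ) : h x = x * h 1 := by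
  set k : ℝ →+ ℝ := h - mulRight (h 1)
  have hk_int : ∀ n : ℤ, k n = 0 := fun n => by
    have := map_intCast_smul h ℝ ℝ n (1 : ℝ)
    simp only [smul_eq_mul, mul_one] at this
    simp [k, this]
  have hk_fract : ∀ y, k y = k (Int.fract y) := fun y => by
    conv_lhs => rw [← Int.floor_add_fract y]
    rw [map_add, hk_int, zero_add]
  have hk_bound : ∀ y, |k y| ≤ C + |h 1| := fun y => by
    have hy : Int.fract y ∈ Icc (0 : ℝ) 1 := ⟨Int.fract_nonneg y, (Int.fract_lt_one y).le⟩
    have h1 : |Int.fract y * h 1| ≤ |h 1| := by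
      rw [abs_mul, abs_of_nonneg hy.1]
      exact mul_le_of_le_one_left (abs_nonneg _) hy.2
    rw [hk_fract]
    calc |k (Int.fract y)| = |h (Int.fract y) - Int.fract y * h 1| := rfl
      _ ≤ |h (Int.fract y)| + |Int.fract y * h 1| := abs_sub _ _
      _ ≤ C + |h 1| := add_le_add (hC _ hy) h1
  have := congrArg (· x) (k.eq_zero_of_abs_le _ hk_bound)
  simp only [k, sub_apply, mulRight_apply, zero_apply] at this
  linarith

end AddMonoidHom

section Hyers

variable {A E : Type*} [AddCommMonoid A] [NormedAddCommGroup E] [NormedSpace ℝ E]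

noncomputable def hyersApprox (f : A → E) (x : A) (n : ℕ) : E :=
  (2 ^ n : ℝ)⁻¹ • f (2 ^ n • x)

variable {f : A → E} {ε : ℝ}

theorem hyersApprox_zero (f : A → E) (x : A) : hyersApprox f x 0 = f x := by
  simp [hyersApprox]

theorem norm_hyersApprox_add_sub_le (hf : ∀ x y, ‖f (x + y) - f x - f y‖ ≤ ε) (x y : A)
    (n : ℕ) :
    ‖hyersApprox f (x + y) n - hyersApprox f x n - hyersApprox f y n‖ ≤ ε * (1 / 2) ^ n := by
  have h : hyersApprox f (x + y) n - hyersApprox f x n - hyersApprox f y n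
      = (2 ^ n : ℝ)⁻¹ • (f (2 ^ n • x + 2 ^ n • y) - f (2 ^ n • x) - f (2 ^ n • y)) := by
    simp only [hyersApprox, smul_add, smul_sub]
  rw [h, norm_smul, norm_inv, norm_pow, Real.norm_two, one_div, inv_pow, mul_comm]
  exact mul_le_mul_of_nonneg_right (hf _ _) (by positivity)

theorem dist_hyersApprox_succ_le (hf : ∀ x y, ‖f (x + y) - f x - f y‖ ≤ ε) (x : A) (n : ℕ) :
    dist (hyersApprox f x n) (hyersApprox f x (n + 1)) ≤ ε / 2 * (1 / 2) ^ n := by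
  have h : hyersApprox f x n - hyersApprox f x (n + 1)
      = -(2 ^ (n + 1) : ℝ)⁻¹ • (f (2 ^ n • x + 2 ^ n • x) - f (2 ^ n • x) - f (2 ^ n • x)) := by
    rw [hyersApprox, hyersApprox, ← two_nsmul, ← mul_nsmul', ← pow_succ']
    module
  rw [dist_eq_norm, h, norm_smul, norm_neg, norm_inv, norm_pow, Real.norm_two, mul_comm]
  calc ‖f (2 ^ n • x + 2 ^ n • x) - f (2 ^ n • x) - f (2 ^ n • x)‖ * (2 ^ (n + 1))⁻¹
      ≤ ε * (2 ^ (n + 1))⁻¹ := mul_le_mul_of_nonneg_right (hf _ _) (by positivity)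
    _ = ε / 2 * (1 / 2) ^ n := by rw [one_div, inv_pow, pow_succ]; ring

/-- Hyers' stability theorem for Cauchy's functional equation. -/
theorem exists_addMonoidHom_norm_sub_le [CompleteSpace E]
    (hf : ∀ x y, ‖f (x + y) - f x - f y‖ ≤ ε) : ∃ g : A →+ E, ∀ x, ‖f x - g x‖ ≤ ε := by
  have hlim : ∀ x, Tendsto (hyersApprox f x) atTop (nhds (limUnder atTop (hyersApprox f x))) :=
    fun x => (cauchySeq_of_le_geometric _ _ (by norm_num) (dist_hyersApprox_succ_le hf x))
      |>.tendsto_limUnder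
  set g := fun x => limUnder atTop (hyersApprox f x)
  have hadd : ∀ x y, g (x + y) = g x + g y := by
    intro x y
    have hzero : Tendsto (fun n => hyersApprox f (x + y) n - hyersApprox f x n
        - hyersApprox f y n) atTop (nhds 0) := by
      refine squeeze_zero_norm (norm_hyersApprox_add_sub_le hf x y) ?_
      simpa using (tendsto_pow_atTop_nhds_zero_of_lt_one (r := (1 / 2 : ℝ))
        (by norm_num) (by norm_num)).const_mul ε
    have := tendsto_nhds_unique (((hlim (x + y)).sub (hlim x)).sub (hlim y)) hzero
    rwa [sub_sub, sub_eq_zero] at this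
  refine ⟨AddMonoidHom.mk' g hadd, fun x => ?_⟩
  have := dist_le_of_le_geometric_of_tendsto₀ _ _ (by norm_num) (dist_hyersApprox_succ_le hf x)
    (hlim x)
  rw [hyersApprox_zero, dist_eq_norm] at this
  exact this.trans_eq (by ring)

end Hyers

theorem LocallyBoundedOn.of_abs_sub_le {φ ψ : ℝ → ℝ} {s : Set ℝ} (hφ : LocallyBoundedOn φ s)
    (K : ℝ) (hK : ∀ x ∈ s, |φ x - ψ x| ≤ K) : LocallyBoundedOn ψ s := by
  intro x hx
  obtain ⟨C, hC⟩ := hφ x hx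
  refine ⟨C + K, ?_⟩
  filter_upwards [hC, self_mem_nhdsWithin] with y hCy hy
  calc |ψ y| = |φ y - (φ y - ψ y)| := by rw [sub_sub_cancel]
    _ ≤ |φ y| + |φ y - ψ y| := abs_sub _ _
    _ ≤ C + K := add_le_add hCy (hK y hy)

theorem LocallyBoundedOn.exists_bound_of_isCompact {φ : ℝ → ℝ} (hφ : LocallyBoundedOn φ univ)
    {K : Set ℝ} (hK : IsCompact K) : ∃ M, ∀ x ∈ K, |φ x| ≤ M := by
  have hloc : ∀ x, ∃ t ∈ nhds x, Bornology.IsBounded (φ '' t) := fun x => by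
    obtain ⟨C, hC⟩ := hφ x (mem_univ x)
    rw [nhdsWithin_univ] at hC
    exact ⟨_, hC, isBounded_iff_forall_norm_le.2 ⟨C, by simp⟩⟩
  simpa using isBounded_iff_forall_norm_le.1
    (Bornology.isBounded_image_of_isLocallyBounded_of_isCompact hK hloc)

noncomputable def sineDefect (g : ℝ → ℝ) (x : ℝ) : ℝ := g (sin x) - cos x * g x

theorem locallyBoundedOn_sineDefect {f g : ℝ → ℝ} {ε : ℝ}
    (hf : LocallyBoundedOn (sineDefect f) univ) (hfg : ∀ x, |f x - g x| ≤ ε) :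
    LocallyBoundedOn (sineDefect g) univ := by
  refine hf.of_abs_sub_le (2 * ε) fun x _ => ?_
  have h : |cos x * (f x - g x)| ≤ ε := (abs_mul _ _).trans_le
    (mul_le_of_le_one_left (abs_nonneg _) (abs_cos_le_one x)) |>.trans (hfg x)
  calc |sineDefect f x - sineDefect g x|
      = |(f (sin x) - g (sin x)) - cos x * (f x - g x)| := by
        rw [sineDefect, sineDefect]; congr 1; ring
    _ ≤ 2 * ε := (abs_sub _ _).trans (by linarith [hfg (sin x)])

noncomputable def leibnizDefect (g : ℝ →+ ℝ) (v : ℝ) : ℝ →+ ℝ :=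
  AddMonoidHom.mk' (fun u => g (u * v) - u * g v - v * g u) fun a b => by
    simp only [add_mul, map_add]; ring

namespace leibnizDefect

variable (g : ℝ →+ ℝ)

theorem apply (u v : ℝ) : leibnizDefect g v u = g (u * v) - u * g v - v * g u := rfl

theorem comm (u v : ℝ) : leibnizDefect g v u = leibnizDefect g u v := by
  simp only [apply, mul_comm u v]; ring

theorem apply_one (v : ℝ) : leibnizDefect g v 1 = -(v * g 1) := by
  simp [apply]

theorem cos_sin (x y : ℝ) : leibnizDefect g (cos y) (sin x) =
    (sineDefect g (x + y) + sineDefect g (x - y) - 2 * cos y * sineDefect g x) / 2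
      - sin x * (g (cos y) + sin y * g y) := by
  simp only [apply, sineDefect, sin_add, sin_sub, cos_add, cos_sub, map_add, map_sub]
  ring

variable {g}

theorem cos_apply_eq_mul (hB : LocallyBoundedOn (sineDefect g) univ) (y t : ℝ) :
    leibnizDefect g (cos y) t = t * leibnizDefect g (cos y) 1 := by
  obtain ⟨M, hM⟩ := hB.exists_bound_of_isCompact (isCompact_closedBall 0 (|y| + 2))
  have hM' : ∀ x, |x| ≤ |y| + 2 → |sineDefect g x| ≤ M := fun x hx =>
    hM x (by rwa [Metric.mem_closedBall, dist_zero_right, norm_eq_abs])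
  refine (leibnizDefect g (cos y)).apply_eq_mul_of_abs_le_on_Icc
    (2 * M + |g (cos y) + sin y * g y|) (fun s hs => ?_) t
  -- write `s = sin x` with `|x| ≤ π / 2 < 2`
  set x := arcsin s
  have hx : |x| ≤ 2 := (abs_le.2 ⟨neg_pi_div_two_le_arcsin s, arcsin_le_pi_div_two s⟩).trans
    (by linarith [pi_le_four])
  have h1 := hM' (x + y) ((abs_add_le x y).trans (by linarith))
  have h2 := hM' (x - y) ((abs_sub x y).trans (by linarith))
  have h3 := hM' x (by linarith [abs_nonneg y])
  have h4 : |cos y * sineDefect g x| ≤ M :=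
    (abs_mul _ _).trans_le (mul_le_of_le_one_left (abs_nonneg _) (abs_cos_le_one y)) |>.trans h3
  have h5 : |sin x * (g (cos y) + sin y * g y)| ≤ |g (cos y) + sin y * g y| :=
    (abs_mul _ _).trans_le (mul_le_of_le_one_left (abs_nonneg _) (abs_sin_le_one x))
  rw [← sin_arcsin (by linarith [hs.1]) hs.2, cos_sin]
  rw [abs_le] at h1 h2 h4 h5 ⊢
  constructor <;> linarith

theorem eq_neg_mul (hB : LocallyBoundedOn (sineDefect g) univ) (u v : ℝ) :
    leibnizDefect g v u = -(u * v * g 1) := by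
  have hIcc : ∀ w ∈ Icc (-1 : ℝ) 1, ∀ t, leibnizDefect g w t = -(t * w * g 1) := by
    intro w hw t
    rw [← cos_arccos hw.1 hw.2, cos_apply_eq_mul hB, apply_one]
    ring
  rw [comm]
  refine ((leibnizDefect g u).apply_eq_mul_of_abs_le_on_Icc |u * g 1| (fun w hw => ?_) v).trans
    (by rw [apply_one]; ring)
  rw [← comm, hIcc w ⟨by linarith [hw.1], hw.2⟩ u, abs_neg, mul_right_comm, abs_mul _ w,
    abs_of_nonneg hw.1]
  exact mul_le_of_le_one_right (abs_nonneg _) hw.2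

end leibnizDefect

theorem stmt_14_general (ε : ℝ) (f : ℝ → ℝ)
    (hf : ∀ x y : ℝ, |f (x + y) - f x - f y| ≤ ε)
    (hlb : LocallyBoundedOn (fun x : ℝ => f (Real.sin x) - Real.cos x * f x) Set.univ) :
    ∃ (l : ℝ) (χ : ℝ → ℝ), IsRealDerivation χ ∧
      ∀ x : ℝ, |f x - (χ x + l * x)| ≤ ε := by
  obtain ⟨g, hg⟩ := exists_addMonoidHom_norm_sub_le (f := f) hf
  have hB : LocallyBoundedOn (sineDefect g) univ := locallyBoundedOn_sineDefect hlb hg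
  refine ⟨g 1, fun x => g x - g 1 * x, ⟨fun x y => ?_, fun x y => ?_⟩, fun x => ?_⟩
  · simp only [map_add]; ring
  · have hxy := leibnizDefect.eq_neg_mul hB x y
    rw [leibnizDefect.apply] at hxy
    linear_combination hxy
  · simpa using hg x

theorem stmt_14 (ε : ℝ) (hε : 0 < ε) (f : ℝ → ℝ)
    (hf : ∀ x y : ℝ, |f (x + y) - f x - f y| ≤ ε)
    (hlb : LocallyBoundedOn (fun x : ℝ => f (Real.sin x) - Real.cos x * f x) Set.univ) :
    ∃ (l : ℝ) (χ : ℝ → ℝ), IsRealDerivation χ ∧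
      ∀ x : ℝ, |f x - (χ x + l * x)| ≤ ε :=
  stmt_14_general ε f hf hlb
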